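/- Let $E$ be a real locally convex space and $A \subseteq E$ a bounded set. Then the s-convex hull of $A$ is contained in the closed convex hull of $A$: every convergent sum $\sum_{i \ge 1} a_i x_i$ with $x_i \in A$, $a_i \ge 0$, $\sum_{i\ge 1} a_i = 1$ lies in $\overline{\mathrm{co}}(A)$. -/

import Mathlib

open Set Pointwise Filter

/- Since `∑ aᵢ = 1 ≠ 0`, the partial weight sums are eventually positive, so the partial sums
renormalized by them are centres of mass of points of `A`, hence lie in `convexHull ℝ A`; and the
renormalization does not change the limit `y`. -/

theorem Finset.tendsto_centerMass_range {E : Type*} [AddCommGroup E] [Module ℝ E]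
    [TopologicalSpace E] [ContinuousSMul ℝ E] {a : ℕ → ℝ} {z : ℕ → E} {c : ℝ} {y : E}
    (hc : c ≠ 0) (hsum : Tendsto (fun n => ∑ i ∈ Finset.range n, a i) atTop (nhds c))
    (hy : Tendsto (fun n => ∑ i ∈ Finset.range n, a i • z i) atTop (nhds y)) :
    Tendsto (fun n => (Finset.range n).centerMass a z) atTop (nhds (c⁻¹ • y)) :=
  (hsum.inv₀ hc).smul hy

theorem Finset.eventually_centerMass_range_mem_convexHull {E : Type*} [AddCommGroup E]
    [Module ℝ E] {A : Set E} {a : ℕ → ℝ} {z : ℕ → E} (ha : ∀ i, 0 ≤ a i) (hz : ∀ i, z i ∈ A)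
    (hpos : ∀ᶠ n in atTop, 0 < ∑ i ∈ Finset.range n, a i) :
    ∀ᶠ n in atTop, (Finset.range n).centerMass a z ∈ convexHull ℝ A :=
  hpos.mono fun _ hn => Finset.centerMass_mem_convexHull _ (fun i _ => ha i) hn (fun i _ => hz i)

theorem stmt6_general {E : Type*} [AddCommGroup E] [Module ℝ E] [TopologicalSpace E]
    [ContinuousSMul ℝ E] {A : Set E}
    (a : ℕ → ℝ) (z : ℕ → E) (ha : ∀ i, 0 ≤ a i) (hz : ∀ i, z i ∈ A)
    (hsum : Tendsto (fun n => ∑ i ∈ Finset.range n, a i) atTop (nhds 1))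
    {y : E} (hy : Tendsto (fun n => ∑ i ∈ Finset.range n, a i • z i) atTop (nhds y)) :
    y ∈ closure (convexHull ℝ A) := by
  have hlim := Finset.tendsto_centerMass_range one_ne_zero hsum hy
  rw [inv_one, one_smul] at hlim
  exact mem_closure_of_tendsto hlim <| Finset.eventually_centerMass_range_mem_convexHull ha hz <|
    hsum.eventually (eventually_gt_nhds zero_lt_one)

/-- For a bounded set `A` in a real Hausdorff locally convex space, every sum of a
convergent series `∑ aᵢ • xᵢ` with `xᵢ ∈ A`, `aᵢ ≥ 0`, `∑ aᵢ = 1` lies in the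
closed convex hull of `A`: the s-convex hull is contained in the closed convex hull. -/
theorem stmt6 {E : Type*} [AddCommGroup E] [Module ℝ E] [TopologicalSpace E]
    [IsTopologicalAddGroup E] [ContinuousSMul ℝ E] [LocallyConvexSpace ℝ E] [T2Space E]
    {A : Set E} (hA : Bornology.IsVonNBounded ℝ A)
    (a : ℕ → ℝ) (z : ℕ → E) (ha : ∀ i, 0 ≤ a i) (hz : ∀ i, z i ∈ A)
    (hsum : Tendsto (fun n => ∑ i ∈ Finset.range n, a i) atTop (nhds 1))
    {y : E} (hy : Tendsto (fun n => ∑ i ∈ Finset.range n, a i • z i) atTop (nhds y)) :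
    y ∈ closure (convexHull ℝ A) :=
  stmt6_general a z ha hz hsum hy
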